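/- Let B, C, X, Y, Z be pairwise disjoint finite sets of integers. Then Δ(B∪X∪Z∪C)·Δ(Y∪Z)·Δ(B,Y)·Δ(Y,C) = Δ(X∪Z)·Δ(B∪Y∪Z∪C)·Δ(B,X)·Δ(X,C). In particular, the ratio Δ(B∪X∪Z∪C)·Δ(Y∪Z) / (Δ(X∪Z)·Δ(B∪Y∪Z∪C)) equals Δ(B,X)·Δ(X,C)/(Δ(B,Y)·Δ(Y,C)) and is independent of the set Z. -/
import Mathlib


/-- `Δ(S) = ∏_{s₁,s₂ ∈ S, s₁ < s₂} (s₂ - s₁)`. -/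
def Dset (S : Finset ℤ) : ℤ :=
  ∏ x ∈ S, ∏ y ∈ S.filter (fun y => x < y), (y - x)

/-- `Δ(S,T) = ∏_{s ∈ S, t ∈ T} |t - s|`. -/
def Dpair (S T : Finset ℤ) : ℤ :=
  ∏ s ∈ S, ∏ t ∈ T, |t - s|

lemma Dpair_split (S T : Finset ℤ) (h : Disjoint S T) :
    Dpair S T = (∏ x ∈ S, ∏ y ∈ T.filter (fun y => x < y), (y - x)) *
      (∏ x ∈ T, ∏ y ∈ S.filter (fun y => x < y), (y - x)) := by
  have swap : (∏ x ∈ T, ∏ y ∈ S.filter (fun y => x < y), (y - x))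
      = ∏ y ∈ S, ∏ x ∈ T.filter (fun x => x < y), (y - x) := by
    simp only [Finset.prod_filter]
    exact Finset.prod_comm
  rw [swap, ← Finset.prod_mul_distrib]
  unfold Dpair
  apply Finset.prod_congr rfl
  intro s hs
  rw [← Finset.prod_filter_mul_prod_filter_not T (fun t => s < t) (fun t => |t - s|)]
  congr 1
  · apply Finset.prod_congr rfl
    intro t ht
    rw [Finset.mem_filter] at ht
    exact abs_of_pos (by omega)
  · have hfe : T.filter (fun t => ¬ s < t) = T.filter (fun t => t < s) := by
      apply Finset.filter_congr
      intro t ht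
      have : s ≠ t := fun e => (Finset.disjoint_left.mp h hs) (e ▸ ht)
      omega
    rw [hfe]
    apply Finset.prod_congr rfl
    intro t ht
    rw [Finset.mem_filter] at ht
    rw [abs_of_neg (by omega)]
    ring

lemma Dset_union (S T : Finset ℤ) (h : Disjoint S T) :
    Dset (S ∪ T) = Dset S * Dset T * Dpair S T := by
  unfold Dset
  rw [Finset.prod_union h]
  simp only [Finset.filter_union]
  rw [Dpair_split S T h]
  have e1 : ∀ x : ℤ, (∏ y ∈ S.filter (fun y => x < y) ∪ T.filter (fun y => x < y), (y - x))
      = (∏ y ∈ S.filter (fun y => x < y), (y - x)) * ∏ y ∈ T.filter (fun y => x < y), (y - x) := by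
    intro x
    exact Finset.prod_union (Finset.disjoint_filter_filter h)
  simp only [e1, Finset.prod_mul_distrib]
  ring

lemma Dpair_union_left (S T U : Finset ℤ) (h : Disjoint S T) :
    Dpair (S ∪ T) U = Dpair S U * Dpair T U := by
  unfold Dpair
  exact Finset.prod_union h

lemma Dpair_union_right (S T U : Finset ℤ) (h : Disjoint T U) :
    Dpair S (T ∪ U) = Dpair S T * Dpair S U := by
  unfold Dpair
  rw [← Finset.prod_mul_distrib]
  exact Finset.prod_congr rfl fun x _ => Finset.prod_union h

theorem Z_independence_case_l_le_b (B C X Y Z : Finset ℤ)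
    (hBC : Disjoint B C) (hBX : Disjoint B X) (hBY : Disjoint B Y) (hBZ : Disjoint B Z)
    (hCX : Disjoint C X) (hCY : Disjoint C Y) (hCZ : Disjoint C Z)
    (hXY : Disjoint X Y) (hXZ : Disjoint X Z) (hYZ : Disjoint Y Z) :
    Dset (B ∪ X ∪ Z ∪ C) * Dset (Y ∪ Z) * (Dpair B Y * Dpair Y C) =
      Dset (X ∪ Z) * Dset (B ∪ Y ∪ Z ∪ C) * (Dpair B X * Dpair X C) := by
  have hBX_Z : Disjoint (B ∪ X) Z := Finset.disjoint_union_left.mpr ⟨hBZ, hXZ⟩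
  have hBXZ_C : Disjoint (B ∪ X ∪ Z) C :=
    Finset.disjoint_union_left.mpr ⟨Finset.disjoint_union_left.mpr ⟨hBC, hCX.symm⟩, hCZ.symm⟩
  have hBY_Z : Disjoint (B ∪ Y) Z := Finset.disjoint_union_left.mpr ⟨hBZ, hYZ⟩
  have hBYZ_C : Disjoint (B ∪ Y ∪ Z) C :=
    Finset.disjoint_union_left.mpr ⟨Finset.disjoint_union_left.mpr ⟨hBC, hCY.symm⟩, hCZ.symm⟩
  rw [Dset_union _ _ hBXZ_C, Dset_union _ _ hBX_Z, Dset_union _ _ hBX,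
    Dset_union _ _ hBYZ_C, Dset_union _ _ hBY_Z, Dset_union _ _ hBY,
    Dset_union _ _ hXZ, Dset_union _ _ hYZ,
    Dpair_union_left _ _ _ hBX_Z, Dpair_union_left _ _ _ hBX,
    Dpair_union_left _ _ _ hBY_Z, Dpair_union_left _ _ _ hBY,
    Dpair_union_left B X C hBX, Dpair_union_left B Y C hBY]
  ring
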